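/- Let n ≥ 3, let Z be a finite set of cardinality 2n, and let σ ∈ Perm(Z) be a product of two disjoint n-cycles (i.e., σ has cycle type {n, n}). Then there is exactly one regular subgroup N ≤ Perm(Z) such that N is isomorphic to the dihedral group D_n and σ ∈ N; in this N, K = ⟨σ⟩ is an index-2 subgroup. -/

import Mathlib

/-- A subgroup of `Equiv.Perm Z` is regular if it acts transitively and
no non-identity element has a fixed point. -/
def IsRegularSubgroup {Z : Type*} (N : Subgroup (Equiv.Perm Z)) : Prop :=
  (∀ z w : Z, ∃ σ ∈ N, σ z = w) ∧ ∀ σ ∈ N, σ ≠ 1 → ∀ z : Z, σ z ≠ z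

/-- The wreath-product subgroup `W(X, Y)` (with `Y = Xᶜ`): all permutations that
either fix both `X` and `Y` setwise, or interchange them. -/
def wprod {Z : Type*} (X : Set Z) : Subgroup (Equiv.Perm Z) where
  carrier := {w | (w '' X = X ∧ w '' Xᶜ = Xᶜ) ∨ (w '' X = Xᶜ ∧ w '' Xᶜ = X)}
  one_mem' := by simp
  mul_mem' := by
    rintro a b (⟨ha1, ha2⟩ | ⟨ha1, ha2⟩) (⟨hb1, hb2⟩ | ⟨hb1, hb2⟩) <;>
      simp only [Set.mem_setOf_eq, Equiv.Perm.coe_mul, Set.image_comp, hb1, hb2, ha1, ha2] <;>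
      tauto
  inv_mem' := by
    intro a h
    have key : ∀ S T : Set Z, a '' S = T → (a⁻¹ : Equiv.Perm Z) '' T = S := by
      intro S T hST
      rw [← hST, Set.image_image]
      simp
    rcases h with ⟨h1, h2⟩ | ⟨h1, h2⟩
    · exact Or.inl ⟨key _ _ h1, key _ _ h2⟩
    · exact Or.inr ⟨key _ _ h2, key _ _ h1⟩

/-- The image of the left regular representation `λ : G → Perm G`. -/
def leftRegRange (G : Type*) [Group G] : Subgroup (Equiv.Perm G) :=
  (MulAction.toPermHom G G).range

/-- `|Υ_n|`: number of units of exponent 2 mod `n`. -/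
noncomputable def upsilonCard (n : ℕ) : ℕ :=
  Nat.card {u : (ZMod n)ˣ // u ^ 2 = 1}

/-!
Label the two `σ`-orbits by the rotations and the reflections of `D_n`; transporting the left
regular action of `D_n` along this labelling gives a regular subgroup in which `r 1` acts as `σ`.

Conversely, in a regular `N ≅ D_n` containing `σ`, an element `g ∉ ⟨σ⟩` corresponds to a
reflection, so `g² = 1` and `g σ g⁻¹ = σ⁻¹`, and regularity forces `g` to move a point `x` into the
other orbit. Two such involutions `g, h` with `g x = h x` are equal, since `h g` commutes with `σ`
and fixes a point of each orbit. Hence any two such subgroups contain one another.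
-/

open Equiv Equiv.Perm Subgroup DihedralGroup

section

variable {Z : Type*}

namespace Equiv.Perm

variable [Fintype Z] [DecidableEq Z] {σ : Perm Z}

theorem pow_apply_eq_pow_apply_iff_modEq {n : ℕ} (hσ : ∀ m ∈ σ.cycleType, m = n) {z : Z}
    (hz : z ∈ σ.support) {a b : ℕ} : (σ ^ a) z = (σ ^ b) z ↔ a ≡ b [MOD n] := by
  have hcard : (σ.cycleOf z).support.card = n := hσ _ <| by
    rw [cycleType_def]
    exact Multiset.mem_map_of_mem _ (cycleOf_mem_cycleFactorsFinset_iff.2 hz)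
  rw [← hcard]
  exact (σ.isCycleOn_support_cycleOf z).pow_apply_eq_pow_apply
    (mem_support_cycleOf_iff.2 ⟨.refl _ _, hz⟩)

theorem exists_two_orbits (hcard : Multiset.card σ.cycleType = 2)
    (hsupp : σ.support = Finset.univ) :
    ∃ x y, ¬σ.SameCycle x y ∧ ∀ z, σ.SameCycle x z ∨ σ.SameCycle y z := by
  rw [cycleType_def, Multiset.card_map, ← Finset.card_def, Finset.card_eq_two] at hcard
  obtain ⟨c, d, hcd, hσcd⟩ := hcard
  have hmem : ∀ z, z ∈ σ.support := fun z => hsupp ▸ Finset.mem_univ z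
  have hc : c ∈ σ.cycleFactorsFinset := by simp [hσcd]
  have hd : d ∈ σ.cycleFactorsFinset := by simp [hσcd]
  obtain ⟨x, hx⟩ := (mem_cycleFactorsFinset_iff.1 hc).1.nonempty_support
  obtain ⟨y, hy⟩ := (mem_cycleFactorsFinset_iff.1 hd).1.nonempty_support
  have hcx := cycle_is_cycleOf hx hc
  have hdy := cycle_is_cycleOf hy hd
  refine ⟨x, y, ?_, fun z => ?_⟩ <;>
    simp only [sameCycle_iff_cycleOf_eq_of_mem_support (hmem _) (hmem _), ← hcx, ← hdy]
  · exact hcd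
  have hz := cycleOf_mem_cycleFactorsFinset_iff.2 (hmem z)
  rw [hσcd, Finset.mem_insert, Finset.mem_singleton] at hz
  rcases hz with hz | hz
  · exact .inl hz.symm
  · exact .inr hz.symm

end Equiv.Perm

def IsReflectionFor {G : Type*} [Group G] (g s : G) : Prop :=
  g * g = 1 ∧ SemiconjBy g s s⁻¹

theorem IsReflectionFor.map {G H : Type*} [Group G] [Group H] {g s : G}
    (h : IsReflectionFor g s) (f : G →* H) : IsReflectionFor (f g) (f s) :=
  ⟨by rw [← map_mul, h.1, map_one], by simpa only [map_inv] using h.2.map f⟩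

namespace DihedralGroup

variable {n : ℕ}

theorem isReflectionFor_sr (k i : ZMod n) : IsReflectionFor (sr k) (r i) :=
  ⟨sr_mul_self k, by simp only [SemiconjBy, sr_mul_r, inv_r, r_mul_sr, sub_neg_eq_add]⟩

theorem exists_eq_r_of_orderOf_eq (hn : n ≠ 2) {s : DihedralGroup n} (hs : orderOf s = n) :
    ∃ i, s = r i := by
  cases s with
  | r i => exact ⟨i, rfl⟩
  | sr i => exact absurd (hs.symm.trans (orderOf_sr i)) hn

variable [NeZero n]

theorem r_mem_zpowers_r_one (k : ZMod n) : r k ∈ zpowers (r 1 : DihedralGroup n) := by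
  simpa [r_one_pow, ZMod.natCast_zmod_val] using
    pow_mem (mem_zpowers (r 1 : DihedralGroup n)) k.val

theorem zpowers_r_eq_zpowers_r_one {i : ZMod n} (hi : orderOf (r i) = n) :
    zpowers (r i) = zpowers (r 1) :=
  eq_of_le_of_card_ge (zpowers_le.2 (r_mem_zpowers_r_one i))
    (by rw [Nat.card_zpowers, Nat.card_zpowers, hi, orderOf_r_one])

theorem exists_eq_sr_of_notMem_zpowers {i : ZMod n} (hi : orderOf (r i) = n)
    {g : DihedralGroup n} (hg : g ∉ zpowers (r i)) : ∃ k, g = sr k := by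
  cases g with
  | r k => exact absurd (zpowers_r_eq_zpowers_r_one hi ▸ r_mem_zpowers_r_one k) hg
  | sr k => exact ⟨k, rfl⟩

theorem isReflectionFor_of_notMem_zpowers {G : Type*} [Group G] (hn : n ≠ 2)
    (f : G ≃* DihedralGroup n) {s g : G} (hs : orderOf s = n) (hg : g ∉ zpowers s) :
    IsReflectionFor g s := by
  obtain ⟨i, hi⟩ := exists_eq_r_of_orderOf_eq hn (s := f s) (by rw [MulEquiv.orderOf_eq, hs])
  have hfg : f g ∉ zpowers (r i) := by
    rintro ⟨k, hk⟩
    exact hg ⟨k, f.injective (by rw [map_zpow, hi]; exact hk)⟩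
  obtain ⟨k, hk⟩ := exists_eq_sr_of_notMem_zpowers (by rw [← hi, MulEquiv.orderOf_eq, hs]) hfg
  simpa only [← hk, ← hi, MulEquiv.coe_toMonoidHom, MulEquiv.symm_apply_apply] using
    (isReflectionFor_sr k i).map f.symm.toMonoidHom

end DihedralGroup

theorem Subgroup.isReflectionFor_of_mem_of_notMem_zpowers {G : Type*} [Group G] {n : ℕ}
    [NeZero n] (hn : n ≠ 2) {N : Subgroup G} (f : N ≃* DihedralGroup n) {s g : G} (hsN : s ∈ N)
    (hgN : g ∈ N) (hs : orderOf s = n) (hg : g ∉ zpowers s) : IsReflectionFor g s := by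
  have hg' : (⟨g, hgN⟩ : N) ∉ zpowers ⟨s, hsN⟩ := by
    rintro ⟨k, hk⟩
    exact hg ⟨k, congrArg Subtype.val hk⟩
  exact (DihedralGroup.isReflectionFor_of_notMem_zpowers hn f (by rwa [Subgroup.orderOf_mk])
    hg').map N.subtype

theorem Equiv.Perm.eq_one_of_commute_of_apply_eq_self {σ u : Perm Z} {x y : Z}
    (hcov : ∀ z, σ.SameCycle x z ∨ σ.SameCycle y z) (hu : Commute u σ) (hx : u x = x)
    (hy : u y = y) : u = 1 := by
  have fix_orbit : ∀ w, u w = w → ∀ k : ℤ, u ((σ ^ k) w) = (σ ^ k) w := fun w hw k => by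
    rw [← mul_apply, (hu.zpow_right k).eq, mul_apply, hw]
  ext z
  rcases hcov z with ⟨k, rfl⟩ | ⟨k, rfl⟩
  · exact fix_orbit x hx k
  · exact fix_orbit y hy k

/-- `h * g` commutes with `σ` and fixes both `x` and `g x`. -/
theorem IsReflectionFor.eq_of_apply_eq {σ g h : Perm Z} {x : Z}
    (hcov : ∀ z, σ.SameCycle x z ∨ σ.SameCycle (g x) z) (hg : IsReflectionFor g σ)
    (hh : IsReflectionFor h σ) (hx : g x = h x) : g = h := by
  have hcomm : SemiconjBy (h * g) σ σ⁻¹⁻¹ := hh.2.inv_right.mul_left hg.2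
  rw [inv_inv] at hcomm
  have hhg : h * g = 1 := eq_one_of_commute_of_apply_eq_self hcov hcomm
    (by rw [mul_apply, hx, ← mul_apply, hh.1, one_apply])
    (by rw [mul_apply, ← mul_apply g g, hg.1, one_apply, hx])
  calc g = h * h * g := by rw [hh.1, one_mul]
    _ = h := by rw [mul_assoc, hhg, mul_one]

theorem IsRegularSubgroup.eq_of_apply_eq {N : Subgroup (Perm Z)} (hN : IsRegularSubgroup N)
    {a b : Perm Z} (ha : a ∈ N) (hb : b ∈ N) {z : Z} (h : a z = b z) : a = b := by
  by_contra hab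
  refine hN.2 (b⁻¹ * a) (N.mul_mem (N.inv_mem hb) ha) ?_ z ?_
  · rwa [Ne, inv_mul_eq_one, eq_comm]
  · rw [mul_apply, h, inv_eq_iff_eq]

theorem le_of_isRegularSubgroup_of_mulEquiv_dihedralGroup {n : ℕ} [NeZero n] (hn : n ≠ 2)
    {σ : Perm Z} (hσ : orderOf σ = n) {x y : Z}
    (hcov : ∀ z, σ.SameCycle x z ∨ σ.SameCycle y z) {N N' : Subgroup (Perm Z)}
    (hN : IsRegularSubgroup N) (hN' : IsRegularSubgroup N') (e : N ≃* DihedralGroup n)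
    (e' : N' ≃* DihedralGroup n) (hσN : σ ∈ N) (hσN' : σ ∈ N') : N ≤ N' := by
  intro g hgN
  by_cases hgσ : g ∈ zpowers σ
  · exact zpowers_le.2 hσN' hgσ
  have hgx : ¬σ.SameCycle x (g x) := by
    rintro ⟨k, hk⟩
    exact hgσ ⟨k, hN.eq_of_apply_eq (N.zpow_mem hσN k) hgN hk⟩
  obtain ⟨τ, hτN', hτx⟩ := hN'.1 x (g x)
  have hτσ : τ ∉ zpowers σ := by
    rintro ⟨k, rfl⟩
    exact hgx ⟨k, hτx⟩
  have hcov' : ∀ z, σ.SameCycle x z ∨ σ.SameCycle (g x) z := fun z =>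
    (hcov z).imp_right ((hcov (g x)).resolve_left hgx).symm.trans
  rw [(isReflectionFor_of_mem_of_notMem_zpowers hn e hσN hgN hσ hgσ).eq_of_apply_eq hcov'
    (isReflectionFor_of_mem_of_notMem_zpowers hn e' hσN' hτN' hσ hτσ) hτx.symm]
  exact hτN'

section LeftRegular

variable {G : Type*} [Group G]

def leftRegularRepVia (e : G ≃ Z) : G →* Perm Z :=
  e.permCongrHom.toMonoidHom.comp (MulAction.toPermHom G G)

theorem leftRegularRepVia_apply_apply (e : G ≃ Z) (g h : G) :
    leftRegularRepVia e g (e h) = e (g * h) := by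
  simp [leftRegularRepVia, Equiv.permCongr_apply]

theorem leftRegularRepVia_injective (e : G ≃ Z) : Function.Injective (leftRegularRepVia e) :=
  fun g g' h => by
    simpa [leftRegularRepVia_apply_apply] using congrArg (fun p : Perm Z => p (e 1)) h

theorem isRegularSubgroup_range_leftRegularRepVia (e : G ≃ Z) :
    IsRegularSubgroup (leftRegularRepVia e).range := by
  refine ⟨fun z w => ?_, ?_⟩
  · obtain ⟨a, rfl⟩ := e.surjective z
    obtain ⟨b, rfl⟩ := e.surjective w
    exact ⟨_, ⟨b * a⁻¹, rfl⟩, by rw [leftRegularRepVia_apply_apply, inv_mul_cancel_right]⟩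
  · rintro _ ⟨g, rfl⟩ hg z hz
    obtain ⟨a, rfl⟩ := e.surjective z
    rw [leftRegularRepVia_apply_apply, e.apply_eq_iff_eq, mul_eq_right] at hz
    exact hg (by rw [hz, map_one])

end LeftRegular

section Labelling

variable {n : ℕ} [NeZero n]

theorem pow_val_one_add {M : Type*} [Monoid M] {g : M} (hg : orderOf g = n) (a : ZMod n) :
    g ^ (1 + a).val = g * g ^ a.val := by
  have hmod : ∀ m, g ^ (m % n) = g ^ m := fun m => hg ▸ pow_mod_orderOf g m
  rw [ZMod.val_add, hmod, ZMod.val_one_eq_one_mod, pow_add, hmod, pow_one]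

/-- Reflections are labelled by `-i` because `r 1 * sr i = sr (i - 1)`: this makes left
multiplication by `r 1` act as `σ` on both orbits. -/
def dihedralLabel (σ : Perm Z) (x y : Z) : DihedralGroup n → Z
  | r i => (σ ^ i.val) x
  | sr i => (σ ^ (-i).val) y

variable {σ : Perm Z} {x y : Z}

theorem dihedralLabel_r_one_mul (hσ : orderOf σ = n) (g : DihedralGroup n) :
    dihedralLabel σ x y (r 1 * g) = σ (dihedralLabel σ x y g) := by
  cases g with
  | r i => rw [r_mul_r, dihedralLabel, dihedralLabel, pow_val_one_add hσ, mul_apply]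
  | sr i =>
    rw [r_mul_sr, dihedralLabel, dihedralLabel, neg_sub, sub_eq_add_neg, pow_val_one_add hσ,
      mul_apply]

theorem dihedralLabel_injective (horb : ∀ z (a b : ℕ), (σ ^ a) z = (σ ^ b) z ↔ a ≡ b [MOD n])
    (hxy : ¬σ.SameCycle x y) : Function.Injective (dihedralLabel (n := n) σ x y) := by
  have val_inj : ∀ {z : Z} {i j : ZMod n}, (σ ^ i.val) z = (σ ^ j.val) z → i = j := fun h => by
    simpa [ZMod.natCast_zmod_val] using (ZMod.natCast_eq_natCast_iff _ _ _).2 ((horb _ _ _).1 h)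
  have cross : ∀ a b : ℕ, (σ ^ a) x ≠ (σ ^ b) y := fun a b h =>
    hxy (sameCycle_pow_right.1 (h ▸ sameCycle_pow_right.2 (.refl _ _)))
  rintro (i | i) (j | j) h
  · exact congrArg r (val_inj h)
  · exact absurd h (cross _ _)
  · exact absurd h.symm (cross _ _)
  · exact congrArg sr (neg_injective (val_inj h))

theorem exists_isRegularSubgroup_mulEquiv_dihedralGroup [Fintype Z]
    (hZ : Fintype.card Z = 2 * n) (hσ : orderOf σ = n)
    (horb : ∀ z (a b : ℕ), (σ ^ a) z = (σ ^ b) z ↔ a ≡ b [MOD n]) (hxy : ¬σ.SameCycle x y) :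
    ∃ N : Subgroup (Perm Z), IsRegularSubgroup N ∧ Nonempty (N ≃* DihedralGroup n) ∧ σ ∈ N := by
  let e : DihedralGroup n ≃ Z := .ofBijective _ <| (Fintype.bijective_iff_injective_and_card _).2
    ⟨dihedralLabel_injective horb hxy, by rw [DihedralGroup.card, hZ]⟩
  refine ⟨(leftRegularRepVia e).range, isRegularSubgroup_range_leftRegularRepVia e,
    ⟨(MonoidHom.ofInjective (leftRegularRepVia_injective e)).symm⟩, r 1, ?_⟩
  ext z
  obtain ⟨g, rfl⟩ := e.surjective z
  rw [leftRegularRepVia_apply_apply]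
  exact dihedralLabel_r_one_mul hσ g

end Labelling

theorem Subgroup.relIndex_zpowers_eq_two {G : Type*} [Group G] {N : Subgroup G} {s : G}
    (hsN : s ∈ N) (hs : orderOf s ≠ 0) (hN : Nat.card N = 2 * orderOf s) :
    (zpowers s).relIndex N = 2 := by
  have h := relIndex_mul_relIndex ⊥ (zpowers s) N bot_le (zpowers_le.2 hsN)
  rw [relIndex_bot_left, relIndex_bot_left, Nat.card_zpowers, hN, mul_comm 2] at h
  exact Nat.eq_of_mul_eq_mul_left (Nat.pos_of_ne_zero hs) h

end

/-- A product of two disjoint `n`-cycles lies in exactly one regular subgroup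
isomorphic to `D_n`, in which it generates the index-2 subgroup. -/
theorem unique_dihedral_over_nn_cycle (n : ℕ) (hn : 3 ≤ n) {Z : Type*} [Fintype Z]
    [DecidableEq Z] (hZ : Fintype.card Z = 2 * n) (σ : Equiv.Perm Z)
    (hσ : σ.cycleType = ({n, n} : Multiset ℕ)) :
    (∃! N : Subgroup (Equiv.Perm Z),
        IsRegularSubgroup N ∧ Nonempty (N ≃* DihedralGroup n) ∧ σ ∈ N) ∧
    ∀ N : Subgroup (Equiv.Perm Z),
      IsRegularSubgroup N ∧ Nonempty (N ≃* DihedralGroup n) ∧ σ ∈ N →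
        (Subgroup.zpowers σ).relIndex N = 2 := by
  have : NeZero n := ⟨by omega⟩
  have hord : orderOf σ = n := by simp [← lcm_cycleType, hσ]
  have hsupp : σ.support = Finset.univ :=
    Finset.eq_univ_of_card _ (by rw [← sum_cycleType, hσ, hZ]; simp [two_mul])
  have horb : ∀ z (a b : ℕ), (σ ^ a) z = (σ ^ b) z ↔ a ≡ b [MOD n] := fun z _ _ =>
    pow_apply_eq_pow_apply_iff_modEq (by simp [hσ]) (hsupp ▸ Finset.mem_univ z)
  obtain ⟨x, y, hxy, hcov⟩ := exists_two_orbits (by simp [hσ]) hsupp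
  obtain ⟨N, hN⟩ := exists_isRegularSubgroup_mulEquiv_dihedralGroup hZ hord horb hxy
  have hle : ∀ N N' : Subgroup (Perm Z),
      IsRegularSubgroup N ∧ Nonempty (N ≃* DihedralGroup n) ∧ σ ∈ N →
      IsRegularSubgroup N' ∧ Nonempty (N' ≃* DihedralGroup n) ∧ σ ∈ N' → N ≤ N' :=
    fun _ _ ⟨hN, ⟨e⟩, hσN⟩ ⟨hN', ⟨e'⟩, hσN'⟩ =>
      le_of_isRegularSubgroup_of_mulEquiv_dihedralGroup (by omega) hord hcov hN hN' e e' hσN hσN'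
  refine ⟨⟨N, hN, fun N' hN' => le_antisymm (hle _ _ hN' hN) (hle _ _ hN hN')⟩, ?_⟩
  rintro N' ⟨-, ⟨e⟩, hσN'⟩
  exact relIndex_zpowers_eq_two hσN' (by omega) (by rw [Nat.card_congr e.toEquiv, nat_card, hord])
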